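/- Let H be real symmetric n×n, U₀ ∈ ℝ^{n×N} with U₀ᵀHU₀ < 0, and let σ₁(0) be the smallest eigenvalue of U₀ᵀU₀. Set β = min{1, σ₁(0)}. Then for all t ≥ 0 every nonzero eigenvalue σ of Z(t) = exp(−Ht)U₀[I_N − U₀ᵀU₀ + U₀ᵀexp(−2Ht)U₀]^{−1}U₀ᵀexp(−Ht) satisfies σ ≥ β. -/

import Mathlib

/-!
Put `G = U₀ᵀU₀`, `K = U₀ᵀ exp(−2tH) U₀` and `M = 1 − G + K`. The operator inequality
`exp A ≥ 1 + A` for symmetric `A = −2tH`, together with `U₀ᵀHU₀ < 0`, gives `K ≥ G`, so `M ≥ 1` is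
invertible. Since `Z(t) = (e^{−tH}U₀)(M⁻¹U₀ᵀe^{−tH})`, a nonzero eigenvalue `σ` of `Z(t)` is an
eigenvalue of the swapped product `M⁻¹K`. For an eigenvector `w` we get `Kw = σMw`, and pairing
with `w` gives `k = σ(s − g + k)` with `s = wᵀw`, `g = wᵀGw ≥ λ_min(G) s` and `k = wᵀKw ≥ g`.
Hence `β(s − g + k) ≤ g + (k − g) = k`, i.e. `β ≤ σ`.
-/

open Matrix NormedSpace

/-- The smallest eigenvalue of a symmetric matrix, characterized as the infimum of the
Rayleigh quotient over unit vectors. -/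
noncomputable def minEig {N : ℕ} (M : Matrix (Fin N) (Fin N) ℝ) : ℝ :=
  sInf {r : ℝ | ∃ a : Fin N → ℝ, a ⬝ᵥ a = 1 ∧ r = a ⬝ᵥ (M *ᵥ a)}

theorem Matrix.mem_spectrum_iff_exists_mulVec_eq_smul {K n : Type*} [Field K] [Fintype n]
    [DecidableEq n] {A : Matrix n n K} {μ : K} :
    μ ∈ spectrum K A ↔ ∃ v ≠ 0, A *ᵥ v = μ • v := by
  rw [← spectrum_toLin', ← Module.End.hasEigenvalue_iff_mem_spectrum,
    Module.End.hasEigenvalue_iff, Submodule.ne_bot_iff]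
  simp only [Module.End.mem_eigenspace_iff, toLin'_apply]
  exact ⟨fun ⟨v, hv, hv0⟩ => ⟨v, hv0, hv⟩, fun ⟨v, hv0, hv⟩ => ⟨v, hv, hv0⟩⟩

theorem Matrix.mem_spectrum_mul_comm_of_ne_zero {K m n : Type*} [Field K] [Fintype m]
    [Fintype n] [DecidableEq m] [DecidableEq n] {X : Matrix m n K} {Y : Matrix n m K} {μ : K}
    (hμ : μ ∈ spectrum K (X * Y)) (hμ0 : μ ≠ 0) : μ ∈ spectrum K (Y * X) := by
  obtain ⟨v, hv0, hv⟩ := mem_spectrum_iff_exists_mulVec_eq_smul.mp hμ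
  refine mem_spectrum_iff_exists_mulVec_eq_smul.mpr ⟨Y *ᵥ v, fun hYv => ?_, ?_⟩
  · rw [← mulVec_mulVec, hYv, mulVec_zero, eq_comm, smul_eq_zero] at hv
    exact hv.elim hμ0 hv0
  · rw [mulVec_mulVec, Matrix.mul_assoc, ← mulVec_mulVec, hv, mulVec_smul]

theorem Matrix.IsHermitian.posSemidef_exp_sub_one_sub {m : Type*} [Fintype m] [DecidableEq m]
    {A : Matrix m m ℝ} (hA : A.IsHermitian) : (NormedSpace.exp A - 1 - A).PosSemidef := by
  -- `NormedSpace.exp` does not depend on a norm, but relating it to `cfc` needs one.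
  open scoped MatrixOrder Matrix.Norms.L2Operator in
  have hcfc : NormedSpace.exp A - 1 - A = cfc (fun x => Real.exp x - 1 - x) A := by
    rw [cfc_sub .., cfc_sub .., cfc_const_one .., cfc_id' .., CFC.real_exp_eq_normedSpace_exp]
  open scoped MatrixOrder in
  rw [← nonneg_iff_posSemidef, hcfc]
  exact cfc_nonneg fun x _ => by linarith [Real.add_one_le_exp x]

theorem Matrix.IsHermitian.posSemidef_transpose_mul_exp_mul_sub {m k : Type*} [Fintype m]
    [Fintype k] [DecidableEq m] {A : Matrix m m ℝ} (hA : A.IsHermitian) (U : Matrix m k ℝ)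
    (hUAU : (Uᵀ * A * U).PosSemidef) :
    (Uᵀ * NormedSpace.exp A * U - Uᵀ * U).PosSemidef := by
  have hsplit : Uᵀ * NormedSpace.exp A * U - Uᵀ * U =
      Uᵀ * (NormedSpace.exp A - 1 - A) * U + Uᵀ * A * U := by
    simp only [Matrix.mul_sub, Matrix.sub_mul, Matrix.mul_one]
    abel
  rw [hsplit, ← conjTranspose_eq_transpose_of_trivial]
  exact hA.posSemidef_exp_sub_one_sub.conjTranspose_mul_mul_same U |>.add
    (conjTranspose_eq_transpose_of_trivial U ▸ hUAU)

theorem minEig_mul_dotProduct_self_le {N : ℕ} {M : Matrix (Fin N) (Fin N) ℝ}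
    (hM : M.PosSemidef) (x : Fin N → ℝ) : minEig M * (x ⬝ᵥ x) ≤ x ⬝ᵥ (M *ᵥ x) := by
  rcases eq_or_ne x 0 with rfl | hx
  · simp
  have hs : 0 < x ⬝ᵥ x := dotProduct_self_star_pos_iff.mpr hx
  set a := (√(x ⬝ᵥ x))⁻¹ • x
  have haa : a ⬝ᵥ a = 1 := by
    simp only [a, smul_dotProduct, dotProduct_smul, smul_eq_mul, ← mul_assoc, ← mul_inv,
      Real.mul_self_sqrt hs.le, inv_mul_cancel₀ hs.ne']
  have haMa : a ⬝ᵥ (M *ᵥ a) = (x ⬝ᵥ x)⁻¹ * (x ⬝ᵥ (M *ᵥ x)) := by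
    simp only [a, mulVec_smul, smul_dotProduct, dotProduct_smul, smul_eq_mul, ← mul_assoc,
      ← mul_inv, Real.mul_self_sqrt hs.le]
  have hbdd : BddBelow {r : ℝ | ∃ a : Fin N → ℝ, a ⬝ᵥ a = 1 ∧ r = a ⬝ᵥ (M *ᵥ a)} := by
    refine ⟨0, ?_⟩
    rintro _ ⟨b, -, rfl⟩
    simpa using hM.dotProduct_mulVec_nonneg b
  have hle : minEig M ≤ (x ⬝ᵥ x)⁻¹ * (x ⬝ᵥ (M *ᵥ x)) := haMa ▸ csInf_le hbdd ⟨a, haa, rfl⟩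
  rwa [le_inv_mul_iff₀ hs, mul_comm] at hle

theorem min_one_minEig_le_of_mem_spectrum {N : ℕ} {G K : Matrix (Fin N) (Fin N) ℝ}
    (hG : G.PosSemidef) (hGK : (K - G).PosSemidef) {σ : ℝ}
    (hσ : σ ∈ spectrum ℝ ((1 - G + K)⁻¹ * K)) : min 1 (minEig G) ≤ σ := by
  have hM : (1 - G + K).PosDef := by
    rw [show 1 - G + K = 1 + (K - G) by abel]
    exact PosDef.one.add_posSemidef hGK
  obtain ⟨w, hw0, hw⟩ := mem_spectrum_iff_exists_mulVec_eq_smul.mp hσ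
  have hKw : w ⬝ᵥ (K *ᵥ w) = σ * (w ⬝ᵥ w - w ⬝ᵥ (G *ᵥ w) + w ⬝ᵥ (K *ᵥ w)) := by
    conv_lhs => rw [← mul_nonsing_inv_cancel_left _ K ((isUnit_iff_isUnit_det _).mp hM.isUnit),
      ← mulVec_mulVec, hw, mulVec_smul, dotProduct_smul, smul_eq_mul]
    simp only [add_mulVec, sub_mulVec, one_mulVec, dotProduct_add, dotProduct_sub]
  have hs : 0 < w ⬝ᵥ w := dotProduct_self_star_pos_iff.mpr hw0
  have hGw := minEig_mul_dotProduct_self_le hG w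
  have hGKw : 0 ≤ w ⬝ᵥ ((K - G) *ᵥ w) := by simpa using hGK.dotProduct_mulVec_nonneg w
  rw [sub_mulVec, dotProduct_sub] at hGKw
  have hβ1 := min_le_left 1 (minEig G)
  have hβG := min_le_right 1 (minEig G)
  refine le_of_mul_le_mul_right (a := w ⬝ᵥ w - w ⬝ᵥ (G *ᵥ w) + w ⬝ᵥ (K *ᵥ w)) ?_ (by linarith)
  nlinarith

/-- With `β = min{1, λ_min(U₀ᵀU₀)}`, every nonzero eigenvalue `σ` of
`Z(t) = exp(−Ht)U₀[I − U₀ᵀU₀ + U₀ᵀexp(−2Ht)U₀]⁻¹U₀ᵀexp(−Ht)` satisfies `σ ≥ β`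
for all `t ≥ 0`. -/
theorem stmt_14 {n N : ℕ} (H : Matrix (Fin n) (Fin n) ℝ) (hH : H.IsSymm)
    (U₀ : Matrix (Fin n) (Fin N) ℝ)
    (hneg : (-(U₀ᵀ * H * U₀)).PosDef)
    (Z : ℝ → Matrix (Fin n) (Fin n) ℝ)
    (hZ : ∀ t : ℝ, Z t = NormedSpace.exp ((-t) • H) * U₀ *
        (1 - U₀ᵀ * U₀ + U₀ᵀ * NormedSpace.exp ((-(2 * t)) • H) * U₀)⁻¹ * U₀ᵀ * NormedSpace.exp ((-t) • H)) :
    ∀ t ≥ (0:ℝ), ∀ σ ∈ spectrum ℝ (Z t), σ ≠ 0 →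
      min 1 (minEig (U₀ᵀ * U₀)) ≤ σ := by
  intro t ht σ hσ hσ0
  have hEE : NormedSpace.exp ((-t) • H) * NormedSpace.exp ((-t) • H) =
      NormedSpace.exp ((-(2 * t)) • H) := by
    rw [← exp_add_of_commute _ _ (Commute.refl _), ← add_smul]
    congr 2
    ring
  have hHerm : ((-(2 * t)) • H).IsHermitian := isHermitian_iff_isSymm.mpr (hH.smul _)
  have hUHU : (U₀ᵀ * ((-(2 * t)) • H) * U₀).PosSemidef := by
    simpa [Matrix.mul_smul, Matrix.smul_mul] using
      hneg.posSemidef.smul (by positivity : 0 ≤ 2 * t)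
  rw [hZ, show ∀ A B C D E : Matrix _ _ ℝ, A * B * C * D * E = (A * B) * (C * D * E) by
    intros; simp only [Matrix.mul_assoc]] at hσ
  replace hσ := mem_spectrum_mul_comm_of_ne_zero hσ hσ0
  rw [show ∀ A B C D E : Matrix _ _ ℝ, A * B * C * (D * E) = A * (B * (C * D) * E) by
    intros; simp only [Matrix.mul_assoc], hEE] at hσ
  exact min_one_minEig_le_of_mem_spectrum (posSemidef_conjTranspose_mul_self U₀)
    (hHerm.posSemidef_transpose_mul_exp_mul_sub U₀ hUHU) hσ
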